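/- Let V be a finite-dimensional complex inner product space and let A₁, A₂ be positive-semidefinite self-adjoint linear operators on V with null spaces L₁ = ker A₁ and L₂ = ker A₂, and set L = L₁ ∩ L₂. Suppose v > 0 is such that ⟨x, Aᵢ x⟩ ≥ v‖x‖² for every x orthogonal to Lᵢ (i = 1, 2). Let c = sup{|⟨x, y⟩| : x ∈ L₁ ∩ L^⊥, y ∈ L₂ ∩ L^⊥, ‖x‖ = ‖y‖ = 1} (where L^⊥ is the orthogonal complement of L, and the supremum over an empty set is 0). Then for every x ∈ L^⊥, ⟨x, (A₁ + A₂) x⟩ ≥ v(1 − c)‖x‖²; equivalently, the smallest nonzero eigenvalue of A₁ + A₂ is at least v(1 − c). -/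

import Mathlib

/-!
Project `x ∈ Lᗮ` onto the two kernels, `uᵢ = Pᵢ x`. Self-adjointness and the gap give
`⟪x, Aᵢ x⟫ ≥ v ‖x - uᵢ‖² = v (‖x‖² - ‖uᵢ‖²)`, so it suffices that `‖u₁‖² + ‖u₂‖² ≤ (1 + c) ‖x‖²`.
Both `uᵢ` lie in `Lᗮ`, so the angle bound gives `‖u₁ + u₂‖² ≤ (1 + c) (‖u₁‖² + ‖u₂‖²)`, while
`‖u₁‖² + ‖u₂‖² = re ⟪u₁ + u₂, x⟫ ≤ ‖u₁ + u₂‖ ‖x‖`; together these give the bound.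
-/

open scoped InnerProductSpace
open RCLike

lemma norm_add_sq_le_of_re_inner_le {𝕜 E : Type*} [RCLike 𝕜] [NormedAddCommGroup E]
    [InnerProductSpace 𝕜 E] {u w : E} {c : ℝ} (hc : 0 ≤ c)
    (h : re ⟪u, w⟫_𝕜 ≤ c * (‖u‖ * ‖w‖)) :
    ‖u + w‖ ^ 2 ≤ (1 + c) * (‖u‖ ^ 2 + ‖w‖ ^ 2) := by
  have hamgm : 2 * (‖u‖ * ‖w‖) ≤ ‖u‖ ^ 2 + ‖w‖ ^ 2 := by nlinarith [sq_nonneg (‖u‖ - ‖w‖)]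
  rw [norm_add_sq (𝕜 := 𝕜)]
  nlinarith [mul_le_mul_of_nonneg_left hamgm hc]

namespace Submodule

variable {𝕜 E : Type*} [RCLike 𝕜] [NormedAddCommGroup E] [InnerProductSpace 𝕜 E]

/-- Since `sSup ∅ = 0` on `ℝ`, this is `0` when `M₁` or `M₂` is `⊥`. -/
noncomputable def cosAngle (M₁ M₂ : Submodule 𝕜 E) : ℝ :=
  sSup {r : ℝ | ∃ x ∈ M₁, ∃ y ∈ M₂, ‖x‖ = 1 ∧ ‖y‖ = 1 ∧ r = ‖⟪x, y⟫_𝕜‖}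

lemma cosAngle_nonneg (M₁ M₂ : Submodule 𝕜 E) : 0 ≤ cosAngle M₁ M₂ :=
  Real.sSup_nonneg fun _ ⟨_, _, _, _, _, _, hr⟩ => hr ▸ norm_nonneg _

lemma norm_inner_le_cosAngle_mul {M₁ M₂ : Submodule 𝕜 E} {x y : E} (hx : x ∈ M₁) (hy : y ∈ M₂) :
    ‖⟪x, y⟫_𝕜‖ ≤ cosAngle M₁ M₂ * (‖x‖ * ‖y‖) := by
  rcases eq_or_ne x 0 with rfl | hx0
  · simp
  rcases eq_or_ne y 0 with rfl | hy0
  · simp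
  have hbdd : BddAbove {r : ℝ | ∃ x ∈ M₁, ∃ y ∈ M₂, ‖x‖ = 1 ∧ ‖y‖ = 1 ∧ r = ‖⟪x, y⟫_𝕜‖} :=
    ⟨1, fun _ ⟨a, _, b, _, ha, hb, hr⟩ => hr ▸ (norm_inner_le_norm a b).trans (by simp [ha, hb])⟩
  have hunit := le_csSup hbdd ⟨(‖x‖⁻¹ : 𝕜) • x, M₁.smul_mem _ hx, (‖y‖⁻¹ : 𝕜) • y,
    M₂.smul_mem _ hy, norm_smul_inv_norm hx0, norm_smul_inv_norm hy0, rfl⟩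
  rw [inner_smul_left, inner_smul_right, norm_mul, norm_mul, norm_conj, norm_inv, norm_inv,
    norm_algebraMap', norm_algebraMap', norm_norm, norm_norm, ← mul_assoc, ← mul_inv,
    inv_mul_le_iff₀ (by positivity)] at hunit
  exact hunit.trans_eq (mul_comm _ _)

lemma starProjection_mem_orthogonal_of_le {K L : Submodule 𝕜 E} [K.HasOrthogonalProjection]
    (hLK : L ≤ K) {x : E} (hx : x ∈ Lᗮ) : K.starProjection x ∈ Lᗮ := by
  simpa using Lᗮ.sub_mem hx (orthogonal_le hLK (K.sub_starProjection_mem_orthogonal x))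

lemma norm_sq_sub_norm_starProjection_sq (K : Submodule 𝕜 E) [K.HasOrthogonalProjection]
    (x : E) : ‖x‖ ^ 2 - ‖K.starProjection x‖ ^ 2 = ‖x - K.starProjection x‖ ^ 2 := by
  rw [norm_sq_eq_add_norm_sq_starProjection x K, starProjection_orthogonal_val]
  ring

lemma norm_starProjection_sq_add_le {K₁ K₂ : Submodule 𝕜 E} [K₁.HasOrthogonalProjection]
    [K₂.HasOrthogonalProjection] {c : ℝ} (hc : 0 ≤ c) (x : E)
    (hcos : ‖⟪K₁.starProjection x, K₂.starProjection x⟫_𝕜‖ ≤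
      c * (‖K₁.starProjection x‖ * ‖K₂.starProjection x‖)) :
    ‖K₁.starProjection x‖ ^ 2 + ‖K₂.starProjection x‖ ^ 2 ≤ (1 + c) * ‖x‖ ^ 2 := by
  set u₁ := K₁.starProjection x
  set u₂ := K₂.starProjection x
  set s := ‖u₁‖ ^ 2 + ‖u₂‖ ^ 2
  have hs : s = re ⟪u₁ + u₂, x⟫_𝕜 := by
    rw [inner_add_left, map_add, re_inner_starProjection_eq_normSq,
      re_inner_starProjection_eq_normSq]
    rfl
  have hs_le : s ≤ ‖u₁ + u₂‖ * ‖x‖ := hs ▸ re_inner_le_norm _ _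
  have hsum : ‖u₁ + u₂‖ ^ 2 ≤ (1 + c) * s :=
    norm_add_sq_le_of_re_inner_le hc ((re_le_norm _).trans hcos)
  have hs0 : 0 ≤ s := by positivity
  have hsq : s ^ 2 ≤ (1 + c) * ‖x‖ ^ 2 * s :=
    calc s ^ 2 ≤ (‖u₁ + u₂‖ * ‖x‖) ^ 2 := pow_le_pow_left₀ hs0 hs_le 2
      _ = ‖u₁ + u₂‖ ^ 2 * ‖x‖ ^ 2 := mul_pow _ _ _
      _ ≤ (1 + c) * s * ‖x‖ ^ 2 := mul_le_mul_of_nonneg_right hsum (sq_nonneg _)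
      _ = (1 + c) * ‖x‖ ^ 2 * s := by ring
  nlinarith [mul_nonneg (add_nonneg zero_le_one hc) (sq_nonneg ‖x‖)]

end Submodule

namespace LinearMap.IsSymmetric

variable {𝕜 E : Type*} [RCLike 𝕜] [NormedAddCommGroup E] [InnerProductSpace 𝕜 E]
  {A : E →ₗ[𝕜] E}

lemma inner_sub_map_sub_of_mem_ker (hA : A.IsSymmetric) {u : E} (hu : u ∈ ker A) (x : E) :
    ⟪x - u, A (x - u)⟫_𝕜 = ⟪x, A x⟫_𝕜 := by
  rw [map_sub, mem_ker.mp hu, sub_zero, inner_sub_left, ← hA u x, mem_ker.mp hu, inner_zero_left,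
    sub_zero]

lemma mul_sub_norm_starProjection_ker_sq_le (hA : A.IsSymmetric)
    [(ker A).HasOrthogonalProjection] {v : ℝ}
    (hgap : ∀ y ∈ (ker A)ᗮ, v * ‖y‖ ^ 2 ≤ re ⟪y, A y⟫_𝕜) (x : E) :
    v * (‖x‖ ^ 2 - ‖(ker A).starProjection x‖ ^ 2) ≤ re ⟪x, A x⟫_𝕜 := by
  rw [Submodule.norm_sq_sub_norm_starProjection_sq,
    ← hA.inner_sub_map_sub_of_mem_ker ((ker A).starProjection_apply_mem x)]
  exact hgap _ ((ker A).sub_starProjection_mem_orthogonal x)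

end LinearMap.IsSymmetric

theorem kitaev_geometric_corollary_general
    {V : Type*} [NormedAddCommGroup V] [InnerProductSpace ℂ V] [FiniteDimensional ℂ V]
    (A₁ A₂ : V →ₗ[ℂ] V)
    (hA₁_sa : ∀ x y : V, ⟪A₁ x, y⟫_ℂ = ⟪x, A₁ y⟫_ℂ)
    (hA₂_sa : ∀ x y : V, ⟪A₂ x, y⟫_ℂ = ⟪x, A₂ y⟫_ℂ)
    (L : Submodule ℂ V) (hL : L = LinearMap.ker A₁ ⊓ LinearMap.ker A₂)
    (v : ℝ) (hv : 0 < v)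
    (hgap₁ : ∀ x ∈ (LinearMap.ker A₁)ᗮ, v * ‖x‖ ^ 2 ≤ (⟪x, A₁ x⟫_ℂ).re)
    (hgap₂ : ∀ x ∈ (LinearMap.ker A₂)ᗮ, v * ‖x‖ ^ 2 ≤ (⟪x, A₂ x⟫_ℂ).re)
    (c : ℝ)
    (hc : c = sSup {r : ℝ | ∃ x ∈ LinearMap.ker A₁ ⊓ Lᗮ, ∃ y ∈ LinearMap.ker A₂ ⊓ Lᗮ,
        ‖x‖ = 1 ∧ ‖y‖ = 1 ∧ r = ‖⟪x, y⟫_ℂ‖}) :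
    ∀ x ∈ Lᗮ, v * (1 - c) * ‖x‖ ^ 2 ≤ (⟪x, (A₁ + A₂) x⟫_ℂ).re := by
  intro x hx
  replace hc : c = (LinearMap.ker A₁ ⊓ Lᗮ).cosAngle (LinearMap.ker A₂ ⊓ Lᗮ) := hc
  have hP₁ : (LinearMap.ker A₁).starProjection x ∈ LinearMap.ker A₁ ⊓ Lᗮ :=
    ⟨Submodule.starProjection_apply_mem _ x,
      Submodule.starProjection_mem_orthogonal_of_le (hL ▸ inf_le_left) hx⟩
  have hP₂ : (LinearMap.ker A₂).starProjection x ∈ LinearMap.ker A₂ ⊓ Lᗮ :=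
    ⟨Submodule.starProjection_apply_mem _ x,
      Submodule.starProjection_mem_orthogonal_of_le (hL ▸ inf_le_right) hx⟩
  have hproj := Submodule.norm_starProjection_sq_add_le (hc ▸ Submodule.cosAngle_nonneg _ _) x
    (hc ▸ Submodule.norm_inner_le_cosAngle_mul hP₁ hP₂)
  have h₁ := LinearMap.IsSymmetric.mul_sub_norm_starProjection_ker_sq_le hA₁_sa hgap₁ x
  have h₂ := LinearMap.IsSymmetric.mul_sub_norm_starProjection_ker_sq_le hA₂_sa hgap₂ x
  rw [RCLike.re_to_complex] at h₁ h₂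
  rw [LinearMap.add_apply, inner_add_right, Complex.add_re]
  linarith [mul_le_mul_of_nonneg_left hproj hv.le]

/-- **Corollary to Kitaev's geometric lemma.**
If `A₁, A₂` are positive-semidefinite self-adjoint operators with kernels `L₁, L₂` and
`L = L₁ ⊓ L₂`, each with spectral gap at least `v`, and `c` is the cosine of the angle
between `L₁ ⊓ Lᗮ` and `L₂ ⊓ Lᗮ`, then for every `x ∈ Lᗮ`,
`⟨x, (A₁ + A₂) x⟩ ≥ v (1 − c) ‖x‖²`, i.e. the smallest nonzero eigenvalue of `A₁ + A₂`
is at least `v (1 − c)`. -/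
theorem kitaev_geometric_corollary
    {V : Type*} [NormedAddCommGroup V] [InnerProductSpace ℂ V] [FiniteDimensional ℂ V]
    (A₁ A₂ : V →ₗ[ℂ] V)
    (hA₁_sa : ∀ x y : V, ⟪A₁ x, y⟫_ℂ = ⟪x, A₁ y⟫_ℂ)
    (hA₂_sa : ∀ x y : V, ⟪A₂ x, y⟫_ℂ = ⟪x, A₂ y⟫_ℂ)
    (hA₁_pos : ∀ x : V, 0 ≤ (⟪x, A₁ x⟫_ℂ).re)
    (hA₂_pos : ∀ x : V, 0 ≤ (⟪x, A₂ x⟫_ℂ).re)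
    (L : Submodule ℂ V) (hL : L = LinearMap.ker A₁ ⊓ LinearMap.ker A₂)
    (v : ℝ) (hv : 0 < v)
    (hgap₁ : ∀ x ∈ (LinearMap.ker A₁)ᗮ, v * ‖x‖ ^ 2 ≤ (⟪x, A₁ x⟫_ℂ).re)
    (hgap₂ : ∀ x ∈ (LinearMap.ker A₂)ᗮ, v * ‖x‖ ^ 2 ≤ (⟪x, A₂ x⟫_ℂ).re)
    (c : ℝ)
    (hc : c = sSup {r : ℝ | ∃ x ∈ LinearMap.ker A₁ ⊓ Lᗮ, ∃ y ∈ LinearMap.ker A₂ ⊓ Lᗮ,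
        ‖x‖ = 1 ∧ ‖y‖ = 1 ∧ r = ‖⟪x, y⟫_ℂ‖}) :
    ∀ x ∈ Lᗮ, v * (1 - c) * ‖x‖ ^ 2 ≤ (⟪x, (A₁ + A₂) x⟫_ℂ).re :=
  kitaev_geometric_corollary_general A₁ A₂ hA₁_sa hA₂_sa L hL v hv hgap₁ hgap₂ c hc
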